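/- For any primary element n = a + bi of Z[i] with a, b ∈ Z, the quartic residue symbol satisfies (i/n)_4 = i^{(1-a)/2}. -/

import Mathlib

/-!
Both sides are multiplicative in primary `n`: the symbol by definition, and `i^{(1-a)/2}` because
`(1 - a)/2` is additive modulo 4 on primary elements. Every primary element is a product of primary
primes, so it suffices to treat a primary prime `ϖ = a + bi`. There `(i/ϖ)₄ ≡ i^{(Nϖ-1)/4} (mod ϖ)`
determines the symbol, since distinct fourth roots of unity are incongruent modulo a prime not
dividing 2, and `(Nϖ - 1)/4 = (a² + b² - 1)/4 ≡ (1 - a)/2 (mod 4)`.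
-/

open scoped ComplexConjugate Classical

noncomputable section

/-- The imaginary unit in the Gaussian integers `ℤ[i]`. -/
def iZ : GaussianInt := ⟨0, 1⟩

/-- `n` is primary iff `n ≡ 1 (mod (1+i)^3)`. -/
def IsPrimary (n : GaussianInt) : Prop := (1 + iZ) ^ 3 ∣ n - 1
/-- An abstract quartic residue symbol on `ℤ[i]`, characterized by its defining
properties: at odd primes it is the fourth root of unity congruent to
`a^((N ϖ - 1)/4) mod ϖ`, it vanishes when the arguments are not coprime, it is
extended multiplicatively in the denominator (being `1` at units), and it is
multiplicative in the numerator. -/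
structure QuarticResidueSymbol where
  sym : GaussianInt → GaussianInt → GaussianInt
  sym_pow_four : ∀ ϖ a : GaussianInt, Prime ϖ → IsCoprime ϖ 2 → IsCoprime a ϖ →
    sym a ϖ ^ 4 = 1
  sym_spec : ∀ ϖ a : GaussianInt, Prime ϖ → IsCoprime ϖ 2 → IsCoprime a ϖ →
    ϖ ∣ sym a ϖ - a ^ (((Zsqrtd.norm ϖ - 1) / 4).toNat)
  sym_eq_zero : ∀ ϖ a : GaussianInt, Prime ϖ → IsCoprime ϖ 2 → ¬ IsCoprime a ϖ →
    sym a ϖ = 0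
  sym_mul_right : ∀ a c c' : GaussianInt, IsCoprime c 2 → IsCoprime c' 2 →
    sym a (c * c') = sym a c * sym a c'
  sym_unit_right : ∀ (a : GaussianInt) (u : GaussianIntˣ), sym a (u : GaussianInt) = 1
  sym_mul_left : ∀ a b c : GaussianInt, IsCoprime c 2 →
    sym (a * b) c = sym a c * sym b c

lemma iZ_pow_four : iZ ^ 4 = 1 := by decide

lemma isUnit_iZ : IsUnit iZ := .of_pow_eq_one iZ_pow_four four_ne_zero

lemma not_isUnit_one_add_iZ : ¬ IsUnit (1 + iZ) := by
  rw [← Zsqrtd.norm_eq_one_iff]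
  decide

lemma GaussianInt.toComplex_iZ : GaussianInt.toComplex iZ = Complex.I := by
  simp [iZ, GaussianInt.toComplex_def']

lemma isPrimary_iff {n : GaussianInt} : IsPrimary n ↔ 2 ∣ n.im ∧ 4 ∣ n.re - 1 - n.im := by
  have hcube : (1 + iZ) ^ 3 = ⟨-2, 2⟩ := by decide
  rw [IsPrimary, hcube]
  constructor
  · rintro ⟨⟨x, y⟩, h⟩
    have hre := congrArg Zsqrtd.re h
    have him := congrArg Zsqrtd.im h
    simp only [Zsqrtd.re_sub, Zsqrtd.im_sub, Zsqrtd.re_one, Zsqrtd.im_one, Zsqrtd.re_mul,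
      Zsqrtd.im_mul] at hre him
    omega
  · rintro ⟨⟨l, hl⟩, ⟨m, hm⟩⟩
    refine ⟨⟨-m, -m - l⟩, ?_⟩
    ext <;> simp <;> omega

lemma IsPrimary.isCoprime_two {n : GaussianInt} (hn : IsPrimary n) : IsCoprime n 2 := by
  obtain ⟨⟨l, hl⟩, ⟨m, hm⟩⟩ := isPrimary_iff.mp hn
  refine ⟨1, ⟨-l - 2 * m, -l⟩, ?_⟩
  ext <;> simp <;> omega

lemma IsPrimary.ne_zero {n : GaussianInt} (hn : IsPrimary n) : n ≠ 0 := by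
  rintro rfl
  simp [isPrimary_iff] at hn

lemma IsPrimary.eq_one_of_isUnit {n : GaussianInt} (hn : IsPrimary n) (hu : IsUnit n) :
    n = 1 := by
  obtain ⟨⟨l, hl⟩, ⟨m, hm⟩⟩ := isPrimary_iff.mp hn
  have hnorm : n.re * n.re + n.im * n.im = 1 := by
    simpa [Zsqrtd.norm_def] using (Zsqrtd.norm_eq_one_iff' (by norm_num) n).mpr hu
  have hl0 : l = 0 := by nlinarith
  have hm0 : m = 0 := by subst hl0; nlinarith
  ext <;> simp <;> omega

lemma IsPrimary.of_mul_left {ϖ m : GaussianInt} (hϖ : IsPrimary ϖ) (hϖm : IsPrimary (ϖ * m)) :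
    IsPrimary m := by
  have hcop : IsCoprime ((1 + iZ) ^ 3) ϖ :=
    (hϖ.isCoprime_two.pow_right (n := 2)).symm.of_isCoprime_of_dvd_left ⟨⟨-1, -1⟩, by decide⟩
  refine hcop.dvd_of_dvd_mul_left ?_
  simpa [mul_sub] using dvd_sub hϖm hϖ

lemma exists_isUnit_isPrimary_mul {p : GaussianInt} (hp : IsCoprime p 2) :
    ∃ u, IsUnit u ∧ IsPrimary (u * p) := by
  have hodd : ¬ 2 ∣ p.re + p.im := by
    rintro ⟨k, hk⟩
    refine not_isUnit_one_add_iZ (hp.isUnit_of_dvd' ?_ ⟨⟨1, -1⟩, by decide⟩)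
    exact ⟨⟨k, p.im - k⟩, by ext <;> simp [iZ]; omega⟩
  by_contra! h
  have h1 := h 1 isUnit_one
  have h2 := h (-1) isUnit_one.neg
  have h3 := h iZ isUnit_iZ
  have h4 := h (-iZ) isUnit_iZ.neg
  simp [isPrimary_iff, iZ] at h1 h2 h3 h4
  omega

theorem eq_of_pow_four_eq_one_of_dvd_sub {R : Type*} [CommRing R] [IsDomain R] {p x y : R}
    (hp : Prime p) (h2 : ¬ p ∣ 2) (hx : x ^ 4 = 1) (hy : y ^ 4 = 1) (hxy : p ∣ x - y) :
    x = y := by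
  by_contra hne
  have hsum : x ^ 3 + x ^ 2 * y + x * y ^ 2 + y ^ 3 = 0 := by
    have : (x - y) * (x ^ 3 + x ^ 2 * y + x * y ^ 2 + y ^ 3) = 0 := by
      linear_combination hx - hy
    exact (mul_eq_zero.mp this).resolve_left (sub_ne_zero.mpr hne)
  -- modulo `x - y` the vanishing sum is `4 y ^ 3`, and `y` is a unit
  have h4 : (2 * 2 : R) = (x - y) * (-(x ^ 2 + 2 * x * y + 3 * y ^ 2) * y) := by
    linear_combination y * hsum - 4 * hy
  have : p ∣ 2 * 2 := h4 ▸ dvd_mul_of_dvd_left hxy _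
  exact h2 ((hp.dvd_or_dvd this).elim id id)

namespace QuarticResidueSymbol

lemma sym_iZ_of_prime (S : QuarticResidueSymbol) {ϖ : GaussianInt} (hϖ : Prime ϖ)
    (h2 : IsCoprime ϖ 2) : S.sym iZ ϖ = iZ ^ ((ϖ.norm - 1) / 4).toNat := by
  have hcop : IsCoprime iZ ϖ := by
    simpa using (isCoprime_mul_unit_left_left isUnit_iZ 1 ϖ).mpr isCoprime_one_left
  refine eq_of_pow_four_eq_one_of_dvd_sub hϖ (fun h ↦ hϖ.not_isUnit (h2.isUnit_of_dvd h))
    (S.sym_pow_four ϖ iZ hϖ h2 hcop) ?_ (S.sym_spec ϖ iZ hϖ h2 hcop)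
  rw [← pow_mul, mul_comm, pow_mul, iZ_pow_four, one_pow]

end QuarticResidueSymbol

lemma IsPrimary.toNat_norm_sub_one_div_four_modEq {q : GaussianInt} (hq : IsPrimary q) :
    (((q.norm - 1) / 4).toNat : ℤ) ≡ (1 - q.re) / 2 [ZMOD 4] := by
  obtain ⟨⟨l, hl⟩, ⟨m, hm⟩⟩ := isPrimary_iff.mp hq
  obtain ⟨k, hk⟩ := Int.even_mul_succ_self l
  have hre : q.re = 1 + 2 * l + 4 * m := by omega
  have hnorm : q.norm - 1 = 4 * (-l + 2 * m + 4 * k + 4 * l * m + 4 * m ^ 2) := by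
    rw [Zsqrtd.norm_def, hre, hl]
    linear_combination 8 * hk
  have hq2 : (1 - q.re) / 2 = -(l + 2 * m) := by omega
  have hX : 0 ≤ -l + 2 * m + 4 * k + 4 * l * m + 4 * m ^ 2 := by
    have : 0 ≤ q.norm - 1 := by
      have : q.re ≠ 0 := by omega
      rw [Zsqrtd.norm_def]
      nlinarith [Int.one_le_abs this, sq_abs q.re, mul_self_nonneg q.im]
    omega
  rw [hnorm, Int.mul_ediv_cancel_left _ four_ne_zero, Int.toNat_of_nonneg hX, hq2,
    Int.modEq_iff_dvd]
  exact ⟨-(m + k + l * m + m ^ 2), by ring⟩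

lemma IsPrimary.one_sub_re_mul_div_two_modEq {q m : GaussianInt} (hq : IsPrimary q)
    (hm : IsPrimary m) :
    (1 - (q * m).re) / 2 ≡ (1 - q.re) / 2 + (1 - m.re) / 2 [ZMOD 4] := by
  obtain ⟨⟨p, hp⟩, ⟨s, hs⟩⟩ := isPrimary_iff.mp hq
  obtain ⟨⟨r, hr⟩, ⟨t, ht⟩⟩ := isPrimary_iff.mp hm
  have hqre : q.re = 1 + 2 * p + 4 * s := by omega
  have hmre : m.re = 1 + 2 * r + 4 * t := by omega
  have hprod :
      1 - (q * m).re = 2 * -(p + r + 2 * s + 2 * t + 4 * p * t + 4 * r * s + 8 * s * t) := by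
    rw [Zsqrtd.re_mul, hqre, hmre, hp, hr]
    ring
  have hq2 : (1 - q.re) / 2 = -(p + 2 * s) := by omega
  have hm2 : (1 - m.re) / 2 = -(r + 2 * t) := by omega
  rw [Int.modEq_iff_dvd, hprod, Int.mul_ediv_cancel_left _ two_ne_zero, hq2, hm2]
  exact ⟨p * t + r * s + 2 * s * t, by ring⟩

lemma Complex.I_zpow_eq_of_modEq {a b : ℤ} (h : a ≡ b [ZMOD 4]) : I ^ a = I ^ b := by
  rw [I_zpow_eq_zpow_mod, h.eq, ← I_zpow_eq_zpow_mod]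

-- The unit `u` absorbs the units needed to make each prime factor primary.
@[elab_as_elim]
lemma IsPrimary.induction {P : GaussianInt → Prop} (one : P 1)
    (mul : ∀ ϖ m, Prime ϖ → IsPrimary ϖ → IsPrimary m → P m → P (ϖ * m))
    {n : GaussianInt} (hn : IsPrimary n) : P n := by
  suffices ∀ x u, IsUnit u → IsPrimary (u * x) → P (u * x) by
    simpa using this n 1 isUnit_one (by simpa using hn)
  intro x
  induction x using UniqueFactorizationMonoid.induction_on_prime with
  | h₁ => exact fun u _ h ↦ absurd (mul_zero u) h.ne_zero
  | h₂ x hx => exact fun u hu h ↦ h.eq_one_of_isUnit (hu.mul hx) ▸ one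
  | h₃ a p _ hp ih =>
    intro u hu h
    have hp2 : IsCoprime p 2 :=
      h.isCoprime_two.of_isCoprime_of_dvd_left (dvd_mul_of_dvd_right (dvd_mul_right p a) u)
    obtain ⟨_, ⟨v, rfl⟩, hvp⟩ := exists_isUnit_isPrimary_mul hp2
    have hsplit : u * (p * a) = (v * p) * (u * ↑v⁻¹ * a) := by
      calc u * (p * a) = u * (p * a) * (v * ↑v⁻¹) := by rw [Units.mul_inv, mul_one]
        _ = _ := by ring
    rw [hsplit] at h ⊢
    have hm := hvp.of_mul_left h
    exact mul _ _ (Associated.prime ⟨v, mul_comm p v⟩ hp) hvp hm (ih _ (hu.mul v⁻¹.isUnit) hm)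

/-- Supplementary law: for primary `n = a + bi`, `(i/n)₄ = i^{(1-a)/2}`. -/
theorem stmt3 (S : QuarticResidueSymbol) (n : GaussianInt) (hn : IsPrimary n) :
    GaussianInt.toComplex (S.sym iZ n) = Complex.I ^ (((1 - n.re) / 2 : ℤ)) := by
  refine IsPrimary.induction ?one ?mul hn
  case one => simpa using congrArg GaussianInt.toComplex (S.sym_unit_right iZ 1)
  case mul =>
    intro ϖ m hϖ hϖ_primary hm_primary ih
    have hϖ2 := hϖ_primary.isCoprime_two
    rw [S.sym_mul_right iZ ϖ m hϖ2 hm_primary.isCoprime_two, map_mul, ih,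
      S.sym_iZ_of_prime hϖ hϖ2, map_pow, GaussianInt.toComplex_iZ, ← zpow_natCast,
      ← zpow_add₀ Complex.I_ne_zero]
    exact Complex.I_zpow_eq_of_modEq <|
      (hϖ_primary.toNat_norm_sub_one_div_four_modEq.add_right _).trans
        (hϖ_primary.one_sub_re_mul_div_two_modEq hm_primary).symm
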